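/- Let M be a matroid of rank r ≥ 2 on a finite ground set E, and suppose that for each hyperplane H of M a set U_H ⊆ E is given which is (r−1)-free in M and satisfies cl_{r−2}(U_H) = H. Put 𝓤 = { U_H : H a hyperplane of M with |U_H| ≥ r }. Then there exists a paving matroid N of rank r on E whose dependent hyperplanes (the hyperplanes of N that are dependent in N, equivalently those of cardinality at least r) are exactly the members of 𝓤. -/

import Mathlib

open Matroid Set Filter Real

namespace PavingEnum

/-- The rank of a matroid: the largest cardinality of a base. -/
noncomputable def mrk {α : Type*} (M : Matroid α) : ℕ :=
  sSup {n : ℕ | ∃ B, M.IsBase B ∧ B.ncard = n}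

/-- The rank of a set in a matroid: the largest cardinality of an
independent subset of the set. -/
noncomputable def mrnk {α : Type*} (M : Matroid α) (X : Set α) : ℕ :=
  sSup {n : ℕ | ∃ I, I ⊆ X ∧ M.Indep I ∧ I.ncard = n}

/-- A circuit is a minimal dependent set. -/
def IsCircuit {α : Type*} (M : Matroid α) (C : Set α) : Prop :=
  M.Dep C ∧ ∀ D, D ⊂ C → M.Indep D

/-- A matroid of rank `r` is paving if every circuit has cardinality at least `r`. -/
def Paving {α : Type*} (M : Matroid α) : Prop :=
  ∀ C, IsCircuit M C → (mrk M : ℕ∞) ≤ C.encard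

/-- A matroid is sparse paving if both it and its dual are paving. -/
def SparsePaving {α : Type*} (M : Matroid α) : Prop :=
  Paving M ∧ Paving M✶

/-- `numMatroids n r` : the number of matroids on the ground set `{1, …, n}` of rank `r`. -/
noncomputable def numMatroids (n r : ℕ) : ℕ :=
  {M : Matroid (Fin n) | M.E = Set.univ ∧ mrk M = r}.ncard

/-- `numPaving n r` : the number of paving matroids on `{1, …, n}` of rank `r`. -/
noncomputable def numPaving (n r : ℕ) : ℕ :=
  {M : Matroid (Fin n) | M.E = Set.univ ∧ mrk M = r ∧ Paving M}.ncard

/-- `numSparsePaving n r` : the number of sparse paving matroids on `{1, …, n}` of rank `r`. -/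
noncomputable def numSparsePaving (n r : ℕ) : ℕ :=
  {M : Matroid (Fin n) | M.E = Set.univ ∧ mrk M = r ∧ SparsePaving M}.ncard

end PavingEnum

namespace PavingEnum

/-- `T` is the truncation of `N`: same ground set, and the independent sets of `T`
are exactly the independent sets of `N` of cardinality at most `rk N − 1`. -/
def IsTruncationOf {α : Type*} (T N : Matroid α) : Prop :=
  T.E = N.E ∧ ∀ I : Set α, T.Indep I ↔ (N.Indep I ∧ I.ncard + 1 ≤ mrk N)

/-- `N` is an erection of `M` if `T(N) = M` or `N = M`. -/
def IsErection {α : Type*} (N M : Matroid α) : Prop :=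
  IsTruncationOf M N ∨ N = M

/-- A set `X` is `k`-closed in `M` if it contains the closure of each of its
subsets of cardinality at most `k`. -/
def KClosed {α : Type*} (M : Matroid α) (k : ℕ) (X : Set α) : Prop :=
  ∀ Y ⊆ X, Y.encard ≤ (k : ℕ∞) → M.closure Y ⊆ X

/-- The `k`-closure of a set: the intersection of all `k`-closed sets containing it. -/
def kClosure {α : Type*} (M : Matroid α) (k : ℕ) (X : Set α) : Set α :=
  ⋂₀ {Y | KClosed M k Y ∧ X ⊆ Y}

/-- A flat `F` of `M` of rank `k` is essential if the restriction `M|F` has a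
nontrivial erection, i.e. there is a matroid on ground set `F` of rank `k+1`
whose truncation is `M|F`. -/
def IsEssentialFlat {α : Type*} (M : Matroid α) (F : Set α) : Prop :=
  M.IsFlat F ∧ ∃ N : Matroid α, N.E = F ∧ mrk N = mrnk M F + 1 ∧ IsTruncationOf (M ↾ F) N

end PavingEnum

open PavingEnum

/-- A hyperplane: a maximal proper flat. -/
def IsHyperplane {α : Type*} (M : Matroid α) (H : Set α) : Prop :=
  M.IsFlat H ∧ H ≠ M.E ∧ ∀ F : Set α, M.IsFlat F → H ⊂ F → F = M.E

/-- A set U is k-free in M if it contains no circuit of M of cardinality at most k. -/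
def KFree {α : Type*} (M : Matroid α) (k : ℕ) (U : Set α) : Prop :=
  ∀ C : Set α, PavingEnum.IsCircuit M C → C ⊆ U → ¬ (C.encard ≤ (k : ℕ∞))

/-!
Every `(r-1)`-subset `S` of `U_H` is independent, by `(r-1)`-freeness, and lies in
`H ⊇ U_H`, so it spans `H`; hence no `(r-1)`-set lies in two of the sets `U_H`. For any such
family `𝓗`, declaring independent the sets of size `< r` and the `r`-sets contained in no member
of `𝓗` gives a paving matroid of rank `r`. A member `X` with `|X| ≥ r` is one of its hyperplanes:
a basis `I` of `X` has `r - 1` elements, and `I + e` is a base for every `e ∉ X`, because `X` is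
the only member containing `I`. Conversely, the points `e` of a dependent hyperplane outside a
basis `I` make `I + e` dependent, so they lie in members containing `I`, which all coincide.
-/

open Matroid Set PavingEnum

section

variable {α : Type*} {M : Matroid α} {B F H H' I S X : Set α} {k : ℕ}

namespace Matroid

lemma IsBase.ncard_eq_mrk (hB : M.IsBase B) : B.ncard = mrk M := by
  have hranks : {n : ℕ | ∃ B', M.IsBase B' ∧ B'.ncard = n} = {B.ncard} := by
    ext n
    exact ⟨fun ⟨B', hB', h⟩ => h ▸ hB'.ncard_eq_ncard_of_isBase hB, fun h => ⟨B, hB, h.symm⟩⟩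
  rw [mrk, hranks, csSup_singleton]

lemma Indep.isBase_of_ncard_eq_mrk [M.RankFinite] (hI : M.Indep I) (h : I.ncard = mrk M) :
    M.IsBase I := by
  obtain ⟨B, hB, hIB⟩ := hI.exists_isBase_superset
  rwa [Set.eq_of_subset_of_ncard_le hIB (by rw [h, hB.ncard_eq_mrk]) hB.finite]

lemma IsFlat.eq_ground_of_isBase_subset (hF : M.IsFlat F) (hB : M.IsBase B) (hBF : B ⊆ F) :
    F = M.E :=
  hF.subset_ground.antisymm <| by
    rw [← hB.closure_eq, ← hF.closure]
    exact M.closure_subset_closure hBF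

end Matroid

namespace PavingEnum

lemma isCircuit_iff_isCircuit {C : Set α} : IsCircuit M C ↔ M.IsCircuit C := by
  rw [isCircuit_iff_forall_ssubset]
  exact and_congr_right fun _ => ⟨fun h I hI => h I hI, fun h I hI => h hI⟩

lemma subset_kClosure (M : Matroid α) (k : ℕ) (X : Set α) : X ⊆ kClosure M k X :=
  subset_sInter fun _ hY => hY.2

end PavingEnum

lemma KFree.indep_of_subset (hX : KFree M k X) (hSX : S ⊆ X) (hSE : S ⊆ M.E)
    (hS : S.encard ≤ k) : M.Indep S := by
  by_contra hS_dep
  obtain ⟨C, hCS, hC⟩ := ((not_indep_iff hSE).mp hS_dep).exists_isCircuit_subset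
  exact hX C (isCircuit_iff_isCircuit.mpr hC) (hCS.trans hSX) ((encard_le_encard hCS).trans hS)

namespace IsHyperplane

lemma not_isBase_subset (hH : IsHyperplane M H) (hB : M.IsBase B) : ¬ B ⊆ H :=
  fun hBH => hH.2.1 (hH.1.eq_ground_of_isBase_subset hB hBH)

lemma eq_of_subset (hH : IsHyperplane M H) (hH' : IsHyperplane M H') (hHH' : H ⊆ H') :
    H = H' := by
  by_contra hne
  exact hH'.2.1 (hH.2.2 H' hH'.1 (hHH'.ssubset_of_ne hne))

lemma closure_eq_of_indep [M.RankFinite] (hH : IsHyperplane M H) (hS : M.Indep S)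
    (hSH : S ⊆ H) (hcard : S.ncard + 1 = mrk M) : M.closure S = H := by
  refine (hH.1.closure ▸ M.closure_subset_closure hSH).antisymm fun e heH => ?_
  by_contra he
  have heS : e ∉ S := fun h => he (M.subset_closure S hS.subset_ground h)
  have hins : M.Indep (insert e S) :=
    (hS.insert_indep_iff_of_notMem heS).mpr ⟨hH.1.subset_ground heH, he⟩
  have hbase : M.IsBase (insert e S) := hins.isBase_of_ncard_eq_mrk <| by
    rw [ncard_insert_of_notMem heS hS.finite, hcard]
  exact hH.not_isBase_subset hbase (insert_subset heH hSH)

end IsHyperplane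

namespace PavingEnum

structure IsPavingFamily (E : Set α) (r : ℕ) (𝓗 : Set (Set α)) : Prop where
  subset_ground : ∀ X ∈ 𝓗, X ⊆ E
  eq_of_ncard_add_one_eq : ∀ X ∈ 𝓗, ∀ Y ∈ 𝓗, ∀ S ⊆ X, S ⊆ Y → S.ncard + 1 = r → X = Y
  exists_base : ∃ B ⊆ E, B.ncard = r ∧ ∀ X ∈ 𝓗, ¬ B ⊆ X

def PavingIndep (E : Set α) (r : ℕ) (𝓗 : Set (Set α)) (I : Set α) : Prop :=
  I ⊆ E ∧ (I.ncard < r ∨ I.ncard = r ∧ ∀ X ∈ 𝓗, ¬ I ⊆ X)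

variable {E A J : Set α} {r : ℕ} {𝓗 : Set (Set α)} {e : α}

lemma IsPavingFamily.exists_superset (h𝓗 : IsPavingFamily E r 𝓗) (hI : I.ncard + 1 = r)
    (hA : ∀ e ∈ A \ I, ∃ X ∈ 𝓗, insert e I ⊆ X) (hAI : (A \ I).Nonempty) :
    ∃ X ∈ 𝓗, A ⊆ X := by
  obtain ⟨e₀, he₀⟩ := hAI
  obtain ⟨X, hX, he₀X⟩ := hA e₀ he₀
  have hIX : I ⊆ X := (subset_insert e₀ I).trans he₀X
  refine ⟨X, hX, fun e heA => ?_⟩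
  by_cases heI : e ∈ I
  · exact hIX heI
  obtain ⟨Y, hY, heY⟩ := hA e ⟨heA, heI⟩
  have hYX : Y = X :=
    h𝓗.eq_of_ncard_add_one_eq Y hY X hX I ((subset_insert e I).trans heY) hIX hI
  exact hYX ▸ heY (mem_insert e I)

lemma PavingIndep.ncard_le (hI : PavingIndep E r 𝓗 I) : I.ncard ≤ r := by
  rcases hI.2 with h | ⟨h, -⟩ <;> omega

lemma PavingIndep.ncard_lt_of_subset_mem (hI : PavingIndep E r 𝓗 I) (hX : X ∈ 𝓗)
    (hIX : I ⊆ X) : I.ncard < r := by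
  rcases hI.2 with h | ⟨-, h⟩
  · exact h
  · exact absurd hIX (h X hX)

lemma PavingIndep.subset (hE : E.Finite) (hJ : PavingIndep E r 𝓗 J) (hIJ : I ⊆ J) :
    PavingIndep E r 𝓗 I := by
  have hJfin : J.Finite := hE.subset hJ.1
  refine ⟨hIJ.trans hJ.1, ?_⟩
  obtain rfl | hIJ := hIJ.eq_or_ssubset
  · exact hJ.2
  · exact Or.inl ((ncard_lt_ncard hIJ hJfin).trans_le hJ.ncard_le)

lemma pavingIndep_insert_iff (hE : E.Finite) (hIE : I ⊆ E) (hI : I.ncard + 1 = r)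
    (he : e ∈ E \ I) :
    PavingIndep E r 𝓗 (insert e I) ↔ ∀ X ∈ 𝓗, ¬ insert e I ⊆ X := by
  have hcard : (insert e I).ncard = r := by
    rw [ncard_insert_of_notMem he.2 (hE.subset hIE), hI]
  simp only [PavingIndep, insert_subset_iff, he.1, hIE, hcard, lt_irrefl, true_and, false_or]

lemma PavingIndep.exists_insert (hE : E.Finite) (h𝓗 : IsPavingFamily E r 𝓗)
    (hI : PavingIndep E r 𝓗 I) (hJ : PavingIndep E r 𝓗 J) (hIJ : I.ncard < J.ncard) :
    ∃ e ∈ J, e ∉ I ∧ PavingIndep E r 𝓗 (insert e I) := by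
  have hIfin : I.Finite := hE.subset hI.1
  have hJI : (J \ I).Nonempty :=
    sdiff_nonempty.mpr fun hJI => (ncard_le_ncard hJI hIfin).not_gt hIJ
  by_contra! hdep
  obtain ⟨e₀, he₀J, he₀I⟩ := hJI
  have hI_full : I.ncard + 1 = r := by
    by_contra hne
    refine hdep e₀ he₀J he₀I ⟨insert_subset (hJ.1 he₀J) hI.1, Or.inl ?_⟩
    have := hJ.ncard_le
    rw [ncard_insert_of_notMem he₀I hIfin]
    omega
  obtain ⟨X, hX, hJX⟩ := h𝓗.exists_superset hI_full (A := J) (fun e he => by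
    simpa [pavingIndep_insert_iff hE hI.1 hI_full ⟨hJ.1 he.1, he.2⟩] using hdep e he.1 he.2)
    ⟨e₀, he₀J, he₀I⟩
  have := hJ.ncard_lt_of_subset_mem hX hJX
  omega

lemma IsPavingFamily.exists_pavingIndep (h𝓗 : IsPavingFamily E r 𝓗) :
    ∃ B, PavingIndep E r 𝓗 B ∧ B.ncard = r := by
  obtain ⟨B, hBE, hBr, hB⟩ := h𝓗.exists_base
  exact ⟨B, ⟨hBE, Or.inr ⟨hBr, hB⟩⟩, hBr⟩

lemma IsPavingFamily.pavingIndep_empty (hE : E.Finite) (h𝓗 : IsPavingFamily E r 𝓗) :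
    PavingIndep E r 𝓗 ∅ :=
  have ⟨_, hB, _⟩ := h𝓗.exists_pavingIndep
  hB.subset hE (empty_subset _)

noncomputable def pavingMatroid (hE : E.Finite) (r : ℕ) (𝓗 : Set (Set α))
    (h𝓗 : IsPavingFamily E r 𝓗) : Matroid α :=
  (IndepMatroid.ofFinite hE (PavingIndep E r 𝓗) (h𝓗.pavingIndep_empty hE)
    (fun _ _ hJ hIJ => hJ.subset hE hIJ) (fun _ _ hI hJ hIJ => hI.exists_insert hE h𝓗 hJ hIJ)
    fun _ hI => hI.1).matroid

section pavingMatroid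

variable (hE : E.Finite) (h𝓗 : IsPavingFamily E r 𝓗)

local notation "𝓝" => pavingMatroid hE r 𝓗 h𝓗

instance : (pavingMatroid hE r 𝓗 h𝓗).Finite := ⟨hE⟩

lemma pavingMatroid_indep_iff : Indep 𝓝 I ↔ PavingIndep E r 𝓗 I := Iff.rfl

lemma mrk_pavingMatroid : mrk 𝓝 = r := by
  obtain ⟨B, hB, hBr⟩ := h𝓗.exists_pavingIndep
  obtain ⟨B', hB', hBB'⟩ := ((pavingMatroid_indep_iff hE h𝓗).mpr hB).exists_isBase_superset
  have hle : B'.ncard ≤ r := ((pavingMatroid_indep_iff hE h𝓗).mp hB'.indep).ncard_le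
  have hge : r ≤ B'.ncard := hBr ▸ ncard_le_ncard hBB' (hE.subset hB'.subset_ground)
  rw [← hB'.ncard_eq_mrk]
  omega

lemma le_ncard_of_not_indep (hXE : X ⊆ E) (hX : ¬ Indep 𝓝 X) : r ≤ X.ncard :=
  not_lt.mp fun hlt => hX ⟨hXE, Or.inl hlt⟩

lemma pavingMatroid_paving : Paving 𝓝 := by
  intro C hC
  have hCE : C ⊆ E := hC.1.subset_ground
  rw [mrk_pavingMatroid, ← (hE.subset hCE).cast_ncard_eq, Nat.cast_le]
  exact le_ncard_of_not_indep hE h𝓗 hCE hC.1.not_indep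

lemma ncard_add_one_eq_of_isBasis (hI : IsBasis 𝓝 I X) (hX : ¬ Indep 𝓝 X) (hIr : I.ncard < r) :
    I.ncard + 1 = r := by
  obtain ⟨e, heX, heI⟩ := not_subset.mp fun hXI : X ⊆ I => hX (hI.indep.subset hXI)
  by_contra hne
  refine (hI.insert_dep ⟨heX, heI⟩).not_indep
    ⟨insert_subset (hI.subset_ground heX) hI.indep.1, ?_⟩
  rw [ncard_insert_of_notMem heI (hE.subset hI.indep.1)]
  exact Or.inl (by omega)

lemma indep_insert_of_subset_mem (hX : X ∈ 𝓗) (hI : Indep 𝓝 I) (hIX : I ⊆ X)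
    (hIr : I.ncard + 1 = r) (he : e ∈ E \ X) : Indep 𝓝 (insert e I) := by
  refine (pavingIndep_insert_iff hE hI.1 hIr ⟨he.1, fun heI => he.2 (hIX heI)⟩).mpr
    fun Y hY heIY => he.2 ?_
  have hYX := h𝓗.eq_of_ncard_add_one_eq Y hY X hX I ((subset_insert e I).trans heIY) hIX hIr
  exact hYX ▸ heIY (mem_insert e I)

lemma isHyperplane_of_mem (hX : X ∈ 𝓗) (hXr : r ≤ X.ncard) :
    IsHyperplane 𝓝 X ∧ ¬ Indep 𝓝 X := by
  have hXE : X ⊆ E := h𝓗.subset_ground X hX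
  have hX_dep : ¬ Indep 𝓝 X := fun hXi =>
    (hXi.ncard_lt_of_subset_mem hX subset_rfl).not_ge hXr
  obtain ⟨I, hI⟩ := Matroid.exists_isBasis 𝓝 X hXE
  have hIr : I.ncard + 1 = r := ncard_add_one_eq_of_isBasis hE h𝓗 hI hX_dep
    (hI.indep.ncard_lt_of_subset_mem hX hI.subset)
  have hins (e) (he : e ∈ E \ X) : Indep 𝓝 (insert e I) :=
    indep_insert_of_subset_mem hE h𝓗 hX hI.indep hI.subset hIr he
  have hbase (e) (he : e ∈ E \ X) : IsBase 𝓝 (insert e I) :=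
    (hins e he).isBase_of_ncard_eq_mrk <| by
      rw [mrk_pavingMatroid, ncard_insert_of_notMem (fun h => he.2 (hI.subset h))
        (hE.subset hI.indep.1), hIr]
  have hX_flat : IsFlat 𝓝 X := by
    refine isFlat_iff_closure_eq.mpr
      (subset_antisymm (fun e he => ?_) (Matroid.subset_closure 𝓝 X hXE))
    rw [← hI.closure_eq_closure] at he
    by_contra heX
    have heE : e ∈ E \ X := ⟨Matroid.closure_subset_ground 𝓝 I he, heX⟩
    exact ((hI.indep.insert_indep_iff_of_notMem fun h => heX (hI.subset h)).mp
      (hins e heE)).2 he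
  obtain ⟨B, hBE, -, hB⟩ := h𝓗.exists_base
  refine ⟨⟨hX_flat, fun hXE' => hB X hX (hBE.trans hXE'.symm.subset), fun F hF hXF => ?_⟩,
    hX_dep⟩
  obtain ⟨e, heF, heX⟩ := exists_of_ssubset hXF
  exact hF.eq_ground_of_isBase_subset (hbase e ⟨hF.subset_ground heF, heX⟩)
    (insert_subset heF (hI.subset.trans hXF.subset))

lemma mem_of_isHyperplane_of_not_indep (hH : IsHyperplane 𝓝 H) (hH_dep : ¬ Indep 𝓝 H) :
    H ∈ 𝓗 ∧ r ≤ H.ncard := by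
  have hHE : H ⊆ E := hH.1.subset_ground
  have hHr : r ≤ H.ncard := le_ncard_of_not_indep hE h𝓗 hHE hH_dep
  obtain ⟨I, hI⟩ := Matroid.exists_isBasis 𝓝 H hHE
  have hI_lt : I.ncard < r := by
    refine hI.indep.ncard_le.lt_of_ne fun hIr => hH.2.1 ?_
    refine hH.1.eq_ground_of_isBase_subset ?_ hI.subset
    exact hI.indep.isBase_of_ncard_eq_mrk (by rw [mrk_pavingMatroid, hIr])
  have hIr : I.ncard + 1 = r := ncard_add_one_eq_of_isBasis hE h𝓗 hI hH_dep hI_lt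
  obtain ⟨X, hX, hHX⟩ := h𝓗.exists_superset hIr (A := H) (fun e he => by
    have h := (hI.insert_dep he).not_indep
    rw [pavingMatroid_indep_iff, pavingIndep_insert_iff hE hI.indep.1 hIr ⟨hHE he.1, he.2⟩] at h
    simpa using h)
    (sdiff_nonempty.mpr fun hHI => hH_dep (hI.indep.subset hHI))
  have hXr : r ≤ X.ncard := hHr.trans (ncard_le_ncard hHX (hE.subset (h𝓗.subset_ground X hX)))
  obtain rfl := hH.eq_of_subset (isHyperplane_of_mem hE h𝓗 hX hXr).1 hHX
  exact ⟨hX, hHr⟩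

lemma setOf_isHyperplane_not_indep :
    {H | IsHyperplane 𝓝 H ∧ ¬ Indep 𝓝 H} = {X | X ∈ 𝓗 ∧ (r : ℕ∞) ≤ X.encard} := by
  ext X
  refine ⟨fun ⟨hH, hH_dep⟩ => ?_, fun ⟨hX, hXr⟩ => ?_⟩
  · obtain ⟨hX, hXr⟩ := mem_of_isHyperplane_of_not_indep hE h𝓗 hH hH_dep
    exact ⟨hX, (Nat.cast_le.mpr hXr).trans_eq (hE.subset hH.1.subset_ground).cast_ncard_eq⟩
  · rw [← (hE.subset (h𝓗.subset_ground X hX)).cast_ncard_eq, Nat.cast_le] at hXr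
    exact isHyperplane_of_mem hE h𝓗 hX hXr

end pavingMatroid

end PavingEnum

lemma isPavingFamily_setOf_isHyperplane [M.Finite] (U : Set α → Set α)
    (hU : ∀ H, IsHyperplane M H → U H ⊆ H ∧ KFree M (mrk M - 1) (U H)) :
    IsPavingFamily M.E (mrk M) {X | ∃ H, IsHyperplane M H ∧ X = U H} where
  subset_ground := by
    rintro _ ⟨H, hH, rfl⟩
    exact (hU H hH).1.trans hH.1.subset_ground
  eq_of_ncard_add_one_eq := by
    rintro _ ⟨H, hH, rfl⟩ _ ⟨H', hH', rfl⟩ S hSU hSU' hS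
    have hSH : S ⊆ H := hSU.trans (hU H hH).1
    have hSfin : S.Finite := M.ground_finite.subset (hSH.trans hH.1.subset_ground)
    have hS_indep : M.Indep S := (hU H hH).2.indep_of_subset hSU
      (hSH.trans hH.1.subset_ground) (by rw [← hSfin.cast_ncard_eq, Nat.cast_le]; omega)
    rw [← hH.closure_eq_of_indep hS_indep hSH hS,
      hH'.closure_eq_of_indep hS_indep (hSU'.trans (hU H' hH').1) hS]
  exists_base := by
    obtain ⟨B, hB⟩ := M.exists_isBase
    refine ⟨B, hB.subset_ground, hB.ncard_eq_mrk, ?_⟩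
    rintro _ ⟨H, hH, rfl⟩ hBU
    exact hH.not_isBase_subset hB (hBU.trans (hU H hH).1)

end

theorem uH_dependent_hyperplanes_paving_general {α : Type*} (M : Matroid α) (r : ℕ)
    (hE : M.E.Finite) (hrk : mrk M = r)
    (U : Set α → Set α)
    (hU : ∀ H : Set α, IsHyperplane M H →
      U H ⊆ M.E ∧ KFree M (r - 1) (U H) ∧ kClosure M (r - 2) (U H) = H) :
    ∃ N : Matroid α, N.E = M.E ∧ mrk N = r ∧ Paving N ∧
      {H : Set α | IsHyperplane N H ∧ ¬ N.Indep H} =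
        {X : Set α | ∃ H : Set α, IsHyperplane M H ∧ (r : ℕ∞) ≤ (U H).encard ∧ X = U H} := by
  have : M.Finite := ⟨hE⟩
  subst hrk
  have h𝓗 := isPavingFamily_setOf_isHyperplane U fun H hH =>
    ⟨(subset_kClosure M _ (U H)).trans (hU H hH).2.2.subset, (hU H hH).2.1⟩
  refine ⟨pavingMatroid hE _ _ h𝓗, rfl, mrk_pavingMatroid hE h𝓗, pavingMatroid_paving hE h𝓗, ?_⟩
  rw [setOf_isHyperplane_not_indep]
  ext X
  exact ⟨fun ⟨⟨H, hH, hX⟩, hr⟩ => ⟨H, hH, hX ▸ hr, hX⟩,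
    fun ⟨H, hH, hr, hX⟩ => ⟨⟨H, hH, hX⟩, hX ▸ hr⟩⟩

/-- Let M be a matroid of rank r ≥ 2 on a finite ground set E, and suppose each
hyperplane H of M is assigned a set U_H ⊆ E that is (r−1)-free with
cl_{r−2}(U_H) = H. Then { U_H : H a hyperplane, |U_H| ≥ r } is exactly the
collection of dependent hyperplanes of a paving matroid of rank r on E. -/
theorem uH_dependent_hyperplanes_paving {α : Type*} (M : Matroid α) (r : ℕ)
    (hE : M.E.Finite) (hrk : mrk M = r) (hr : 2 ≤ r)
    (U : Set α → Set α)
    (hU : ∀ H : Set α, IsHyperplane M H →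
      U H ⊆ M.E ∧ KFree M (r - 1) (U H) ∧ kClosure M (r - 2) (U H) = H) :
    ∃ N : Matroid α, N.E = M.E ∧ mrk N = r ∧ Paving N ∧
      {H : Set α | IsHyperplane N H ∧ ¬ N.Indep H} =
        {X : Set α | ∃ H : Set α, IsHyperplane M H ∧ (r : ℕ∞) ≤ (U H).encard ∧ X = U H} :=
  uH_dependent_hyperplanes_paving_general M r hE hrk U hU
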